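/- arXiv:1803.08808 — 4 statements merged into one kernel-verified Lean document; each statement's English description precedes it below -/
import Mathlib

section
/- Let k be a field, C a small category, and D a full subcategory of C that is an ideal, i.e., for every morphism y → x in C with x an object of D, y is also an object of D. Then the restriction functor from functors C → Vect_k to functors D → Vect_k, given by precomposition with the inclusion D ↪ C, sends projective objects to projective objects. -/
/-!
Restriction along `ι : D ⥤ C` is left adjoint to right Kan extension along `ι`, so it preserves
projectives as soon as that right Kan extension preserves epimorphisms. Since `ι` is fully
faithful, the extension agrees with the original functor on `D`; at an object `c ∉ D` the ideal
condition leaves no morphism `c ⟶ ι d`, so the pointwise limit defining the extension is empty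
and its value is zero. Thus the extension is "extension by zero", which is exact.
-/

open CategoryTheory CategoryTheory.Limits

namespace CategoryTheory.Functor

variable {C D H : Type*} [Category* C] [Category* D] [Category* H]

lemma isZero_ran_obj_obj_of_isEmpty [HasZeroMorphisms H] (L : D ⥤ C)
    [∀ F : D ⥤ H, L.HasRightKanExtension F] (F : D ⥤ H) [L.HasPointwiseRightKanExtension F]
    (c : C) (hc : ∀ d, IsEmpty (c ⟶ L.obj d)) : IsZero ((L.ran.obj F).obj c) := by
  rw [IsZero.iff_id_eq_zero]
  exact (isPointwiseRightKanExtensionRanCounit L F c).hom_ext' fun d φ => (hc d).elim φ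

lemma epi_ran_map_app_obj (L : D ⥤ C) [L.Full] [L.Faithful]
    [∀ F : D ⥤ H, L.HasPointwiseRightKanExtension F] {E X : D ⥤ H} (e : E ⟶ X) (d : D)
    [Epi (e.app d)] : Epi ((L.ran.map e).app (L.obj d)) := by
  have h := congr_app (L.ranCounit.naturality e) d
  dsimp at h
  rw [← IsIso.eq_comp_inv] at h
  rw [h]
  infer_instance

end CategoryTheory.Functor

namespace CategoryTheory.ObjectProperty

variable {C H : Type*} [Category* C] [Category* H] [HasZeroMorphisms H] [HasPushouts H]
  {Z : ObjectProperty C} [∀ F : Z.FullSubcategory ⥤ H, Z.ι.HasPointwiseRightKanExtension F]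

lemma ran_ι_preservesEpimorphisms (hZ : ∀ x y : C, (y ⟶ x) → Z x → Z y) :
    (Z.ι.ran (H := H)).PreservesEpimorphisms where
  preserves {E X} e he := by
    rw [NatTrans.epi_iff_epi_app] at he ⊢
    intro c
    by_cases hc : Z c
    · exact Z.ι.epi_ran_map_app_obj e ⟨c, hc⟩
    · exact (Z.ι.isZero_ran_obj_obj_of_isEmpty X c
        fun d => ⟨fun f => hc (hZ _ _ f d.property)⟩).epi _

end CategoryTheory.ObjectProperty

theorem restriction_to_ideal_preserves_projectives (k : Type) [Field k]
    (C : Type) [SmallCategory C] (Z : C → Prop)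
    (hIdeal : ∀ (x y : C), (y ⟶ x) → Z x → Z y)
    (P : C ⥤ ModuleCat.{0} k) (hP : Projective P) :
    Projective (ObjectProperty.ι Z ⋙ P) :=
  have := ObjectProperty.ran_ι_preservesEpimorphisms (H := ModuleCat.{0} k) hIdeal
  (Functor.ranAdjunction _ _).map_projective P hP
end

section
/- Let k be a field, C a small category, and D a full subcategory of C that is an ideal, i.e., for every morphism y → x in C with x an object of D, y is also an object of D. Let W be a functor C → Vect_k and let ⋯ → P^1 → P^0 → W → 0 be a projective resolution in the category of functors C → Vect_k. Then its restriction ⋯ → RP^1 → RP^0 → RW → 0 is a projective resolution of RW in the category of functors D → Vect_k. -/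
open CategoryTheory CategoryTheory.Limits

/-!
Restriction to `D` has a right adjoint, extension by zero, sending `X` to the functor that is
`X c` at objects `c` of `D` and `0` elsewhere (encoded as the product of `X c` over the proofs
of `c ∈ D`). Because `D` is an ideal, every morphism into an object of `D` starts in `D`, which
is what makes this a functor and the unit of the adjunction natural. Extension by zero is
computed objectwise, hence preserves epimorphisms, so its left adjoint, restriction, preserves
projectives. Restriction is exact, so it carries the rest of the resolution along.
-/

namespace CategoryTheory.ObjectProperty

universe w

variable {R : Type*} [Ring R] {C : Type*} [Category C] {Z : ObjectProperty C}

def extendByZero (hZ : ∀ x y : C, (y ⟶ x) → Z x → Z y) :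
    (Z.FullSubcategory ⥤ ModuleCat.{w} R) ⥤ (C ⥤ ModuleCat.{w} R) where
  obj X :=
    { obj c := ModuleCat.of R (∀ h : PLift (Z c), X.obj ⟨c, h.down⟩)
      map {a b} f := ModuleCat.ofHom
        { toFun v hb :=
            X.map (homMk (X := ⟨a, hZ _ _ f hb.down⟩) (Y := ⟨b, hb.down⟩) f) (v ⟨hZ _ _ f hb.down⟩)
          map_add' v w := by funext hb; exact map_add _ _ _
          map_smul' r v := by funext hb; exact map_smul _ _ _ }
      map_id c := ModuleCat.hom_ext <| LinearMap.ext fun v => funext fun h =>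
        ConcreteCategory.congr_hom (X.map_id ⟨c, h.down⟩) _
      map_comp f g := ModuleCat.hom_ext <| LinearMap.ext fun v => funext fun h =>
        ConcreteCategory.congr_hom (X.map_comp (homMk (X := ⟨_, hZ _ _ f (hZ _ _ g h.down)⟩)
          (Y := ⟨_, hZ _ _ g h.down⟩) f) (homMk (Y := ⟨_, h.down⟩) g)) _ }
  map {X Y} g :=
    { app c := ModuleCat.ofHom
        { toFun v h := g.app ⟨c, h.down⟩ (v h)
          map_add' v w := by funext h; exact map_add _ _ _
          map_smul' r v := by funext h; exact map_smul _ _ _ }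
      naturality _ _ _ :=
        ModuleCat.hom_ext <| LinearMap.ext fun v => funext fun h => by simp }

def restrictionAdjunction (hZ : ∀ x y : C, (y ⟶ x) → Z x → Z y) :
    (Functor.whiskeringLeft _ _ (ModuleCat.{w} R)).obj Z.ι ⊣ extendByZero hZ :=
  Adjunction.mkOfUnitCounit
    { unit :=
        { app Q :=
            { app c := ModuleCat.ofHom
                { toFun q := (fun _ => q : ∀ _ : PLift (Z c), Q.obj c)
                  map_add' _ _ := rfl
                  map_smul' _ _ := rfl } } }
      counit :=
        { app X :=
            { app d := ModuleCat.ofHom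
                { toFun v := (v : ∀ h : PLift (Z d.1), X.obj ⟨d.1, h.down⟩) ⟨d.2⟩
                  map_add' _ _ := rfl
                  map_smul' _ _ := rfl } } } }

instance (hZ : ∀ x y : C, (y ⟶ x) → Z x → Z y) :
    (extendByZero hZ : (Z.FullSubcategory ⥤ ModuleCat.{w} R) ⥤ _).PreservesEpimorphisms where
  preserves {X Y} g hg := by
    simp_rw [NatTrans.epi_iff_epi_app, ModuleCat.epi_iff_surjective] at hg ⊢
    intro c v
    choose u hu using fun h : PLift (Z c) => hg ⟨c, h.down⟩ (v h)
    exact ⟨u, funext hu⟩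

lemma projective_ι_comp (hZ : ∀ x y : C, (y ⟶ x) → Z x → Z y) (Q : C ⥤ ModuleCat.{w} R)
    [Projective Q] : Projective (Z.ι ⋙ Q) :=
  (restrictionAdjunction hZ).map_projective Q ‹_›

end CategoryTheory.ObjectProperty

theorem restriction_to_ideal_preserves_projective_resolutions (k : Type) [Field k]
    (C : Type) [SmallCategory C] (Z : C → Prop)
    (hIdeal : ∀ (x y : C), (y ⟶ x) → Z x → Z y)
    (W : C ⥤ ModuleCat.{0} k)
    (P : ℕ → (C ⥤ ModuleCat.{0} k))
    (d : ∀ s : ℕ, P (s + 1) ⟶ P s) (ε : P 0 ⟶ W)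
    (hproj : ∀ s, Projective (P s)) (hepi : Epi ε)
    (w0 : d 0 ≫ ε = 0) (w : ∀ s, d (s + 1) ≫ d s = 0)
    (hex0 : (ShortComplex.mk (d 0) ε w0).Exact)
    (hex : ∀ s, (ShortComplex.mk (d (s + 1)) (d s) (w s)).Exact) :
    -- the restriction to the full subcategory on `Z` is again a projective resolution
    (∀ s, Projective (ObjectProperty.ι Z ⋙ P s)) ∧
    Epi (Functor.whiskerLeft (ObjectProperty.ι Z) ε) ∧
    ∃ (w0' : Functor.whiskerLeft (ObjectProperty.ι Z) (d 0) ≫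
        Functor.whiskerLeft (ObjectProperty.ι Z) ε = 0)
      (w' : ∀ s, Functor.whiskerLeft (ObjectProperty.ι Z) (d (s + 1)) ≫
        Functor.whiskerLeft (ObjectProperty.ι Z) (d s) = 0),
      (ShortComplex.mk _ _ w0').Exact ∧ ∀ s, (ShortComplex.mk _ _ (w' s)).Exact := by
  let res := (Functor.whiskeringLeft _ _ (ModuleCat.{0} k)).obj (ObjectProperty.ι Z)
  exact ⟨fun s => ObjectProperty.projective_ι_comp hIdeal (P s), res.map_epi ε,
    ((ShortComplex.mk _ _ w0).map res).zero, fun s => ((ShortComplex.mk _ _ (w s)).map res).zero,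
    hex0.map res, fun s => (hex s).map res⟩
end

section
/- Let k be a field and n a natural number. Let FI be the category of finite sets of natural numbers and injective functions, and let FI_{≤n} be its full subcategory of sets of cardinality at most n. Let V be a finitely generated, pointwise finite-dimensional functor FI → Vect_k. If p : P → V is a projective cover in the category of functors FI → Vect_k, then its restriction Rp : RP → RV is a projective cover in the category of functors FI_{≤n} → Vect_k. -/
open CategoryTheory CategoryTheory.Limits

/-- Objects of the category `FI` : finite sets of natural numbers. -/
structure FIcat where
  carrier : Finset ℕ

/-- The category `FI` : finite sets of natural numbers with injections between them. -/
instance : Category FIcat where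
  Hom S T := { f : S.carrier → T.carrier // Function.Injective f }
  id S := ⟨id, fun _ _ h => h⟩
  comp f g := ⟨g.1 ∘ f.1, fun _ _ h => f.2 (g.2 h)⟩

/-- A subfunctor of a functor `V : C ⥤ ModuleCat k` : a choice of submodule of each value,
closed under the action of all morphisms. -/
structure Subfunctor {k : Type} [Field k] {C : Type*} [Category C]
    (V : C ⥤ ModuleCat.{0} k) where
  toFun : ∀ S : C, Submodule k (V.obj S)
  map_mem : ∀ {S T : C} (f : S ⟶ T) (v : V.obj S), v ∈ toFun S → V.map f v ∈ toFun T

/-- A functor `V : C ⥤ ModuleCat k` is finitely generated if there are finitely many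
elements `v i ∈ V (S i)` such that the only subfunctor of `V` containing all of them is
`V` itself. -/
def IsFinitelyGenerated {k : Type} [Field k] {C : Type*} [Category C]
    (V : C ⥤ ModuleCat.{0} k) : Prop :=
  ∃ (ι : Type) (_ : Finite ι) (S : ι → C) (v : ∀ i : ι, V.obj (S i)),
    ∀ W : Subfunctor V, (∀ i, v i ∈ W.toFun (S i)) → ∀ X, W.toFun X = ⊤

/-- `p : P ⟶ V` is a projective cover : `P` is projective, `p` is an epimorphism, and any
morphism `g : Q ⟶ P` such that `g ≫ p` is an epimorphism is itself an epimorphism. -/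
def IsProjectiveCover {A : Type*} [Category A] {P V : A} (p : P ⟶ V) : Prop :=
  Projective P ∧ Epi p ∧ ∀ (Q : A) (g : Q ⟶ P), Epi (g ≫ p) → Epi g

/-! Let `ι` be the inclusion of a full subcategory whose defining property passes from the
target of any morphism to its source, as for `FI_{≤n}` in `FI` (an injection `S ↪ T` forces
`|S| ≤ |T|`). Restriction along `ι` is left adjoint to the right Kan extension along `ι`, and the
latter is extension by zero: the comma category `T ↓ ι` is empty when `T` lies outside the
subcategory and has the initial object `𝟙 T` when `T` lies inside. Extension by zero preserves
epimorphisms, so restriction preserves projectives.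

For minimality, let `g : Q ⟶ ι ⋙ P` with `g ≫ ι p` epi. The image of `g` on the subcategory,
together with all of `P` outside it, is a subfunctor of `P` (by the same closure property) that
still maps onto `V`. Since `p` is a projective cover, it is all of `P`, i.e. `g` is epi. -/

namespace CategoryTheory.ObjectProperty

universe u

variable {C : Type u} [SmallCategory C] {Φ : ObjectProperty C} [Φ.InheritedFromTarget ⊤]

lemma isEmpty_structuredArrow_ι {T : C} (hT : ¬ Φ T) : IsEmpty (StructuredArrow T Φ.ι) :=
  ⟨fun f => hT (Φ.of_hom_of_target (Q := ⊤) f.hom trivial f.right.property)⟩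

variable {D : Type*} [Category.{u} D] [HasLimits D] [HasZeroMorphisms D]

lemma isZero_ran_obj_obj (F : Φ.FullSubcategory ⥤ D) {T : C} (hT : ¬ Φ T) :
    IsZero ((Φ.ι.ran.obj F).obj T) :=
  have := isEmpty_structuredArrow_ι hT
  ((isLimitEquivIsTerminalOfIsEmpty _ (limit.cone _) (limit.isLimit _)).isZero).of_iso
    (Φ.ι.ranObjObjIsoLimit F T)

instance preservesEpimorphisms_ran : (Φ.ι.ran (H := D)).PreservesEpimorphisms where
  preserves {F G} e he := by
    rw [NatTrans.epi_iff_epi_app']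
    intro T
    by_cases hT : Φ T
    · have hcounit := congr_app (Φ.ι.ranCounit.naturality e) ⟨T, hT⟩
      dsimp at hcounit
      rw [← IsIso.eq_comp_inv] at hcounit
      have : Epi (e.app ⟨T, hT⟩) := (NatTrans.epi_iff_epi_app' _ e).mp he _
      rw [hcounit]
      infer_instance
    · exact (isZero_ran_obj_obj G hT).epi _

lemma projective_ι_comp_s10 {P : C ⥤ D} (hP : Projective P) : Projective (Φ.ι ⋙ P) :=
  (Φ.ι.ranAdjunction D).map_projective P hP

instance epi_whiskerLeft_ι {P V : C ⥤ D} (p : P ⟶ V) [Epi p] :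
    Epi (Functor.whiskerLeft Φ.ι p) :=
  have := (Φ.ι.ranAdjunction D).isLeftAdjoint
  ((Functor.whiskeringLeft _ _ D).obj Φ.ι).map_epi p

end CategoryTheory.ObjectProperty

namespace Subfunctor

variable {k : Type} [Field k] {C : Type*} [Category C]

@[simps]
noncomputable def toFunctor {V : C ⥤ ModuleCat.{0} k} (W : Subfunctor V) :
    C ⥤ ModuleCat.{0} k where
  obj S := ModuleCat.of k (W.toFun S)
  map f := ModuleCat.ofHom ((V.map f).hom.restrict fun v => W.map_mem f v)
  map_id S := by ext; simp
  map_comp f g := by ext; simp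

@[simps]
noncomputable def ι {V : C ⥤ ModuleCat.{0} k} (W : Subfunctor V) : W.toFunctor ⟶ V where
  app S := ModuleCat.ofHom (W.toFun S).subtype

lemma eq_top_of_epi_ι {V : C ⥤ ModuleCat.{0} k} (W : Subfunctor V) [Epi W.ι] (S : C) :
    W.toFun S = ⊤ := by
  rw [← Submodule.range_subtype (W.toFun S)]
  exact LinearMap.range_eq_top.mpr ((ModuleCat.epi_iff_surjective (W.ι.app S)).mp inferInstance)

variable {Φ : ObjectProperty C} [Φ.InheritedFromTarget ⊤] {P : C ⥤ ModuleCat.{0} k}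
  {Q : Φ.FullSubcategory ⥤ ModuleCat.{0} k}

open Classical in
noncomputable def rangeOrTop (g : Q ⟶ Φ.ι ⋙ P) : Subfunctor P where
  toFun S := if h : Φ S then LinearMap.range (g.app ⟨S, h⟩).hom else ⊤
  map_mem {S T} f v hv := by
    by_cases hT : Φ T
    · have hS : Φ S := Φ.of_hom_of_target (Q := ⊤) f trivial hT
      rw [dif_pos hT]
      rw [dif_pos hS] at hv
      obtain ⟨q, rfl⟩ := hv
      let f' : (⟨S, hS⟩ : Φ.FullSubcategory) ⟶ ⟨T, hT⟩ := ObjectProperty.homMk f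
      exact ⟨Q.map f' q, congr($(g.naturality f') q)⟩
    · simp [dif_neg hT]

lemma rangeOrTop_toFun_of_prop (g : Q ⟶ Φ.ι ⋙ P) {S : C} (hS : Φ S) :
    (rangeOrTop g).toFun S = LinearMap.range (g.app ⟨S, hS⟩).hom :=
  dif_pos hS

lemma rangeOrTop_toFun_of_not_prop (g : Q ⟶ Φ.ι ⋙ P) {S : C} (hS : ¬ Φ S) :
    (rangeOrTop g).toFun S = ⊤ :=
  dif_neg hS

lemma epi_ι_rangeOrTop_comp {V : C ⥤ ModuleCat.{0} k} {p : P ⟶ V} [Epi p] (g : Q ⟶ Φ.ι ⋙ P)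
    [Epi (g ≫ Functor.whiskerLeft Φ.ι p)] : Epi ((rangeOrTop g).ι ≫ p) := by
  rw [NatTrans.epi_iff_epi_app]
  intro S
  rw [ModuleCat.epi_iff_surjective]
  intro v
  by_cases hS : Φ S
  · obtain ⟨q, hq⟩ := (ModuleCat.epi_iff_surjective
      ((g ≫ Functor.whiskerLeft Φ.ι p).app ⟨S, hS⟩)).mp inferInstance v
    exact ⟨⟨g.app _ q, by rw [rangeOrTop_toFun_of_prop g hS]; exact ⟨q, rfl⟩⟩, hq⟩
  · obtain ⟨u, hu⟩ := (ModuleCat.epi_iff_surjective (p.app S)).mp inferInstance v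
    exact ⟨⟨u, by rw [rangeOrTop_toFun_of_not_prop g hS]; trivial⟩, hu⟩

lemma epi_of_rangeOrTop_eq_top (g : Q ⟶ Φ.ι ⋙ P) (h : ∀ S, (rangeOrTop g).toFun S = ⊤) :
    Epi g := by
  rw [NatTrans.epi_iff_epi_app]
  rintro ⟨S, hS⟩
  rw [ModuleCat.epi_iff_surjective, ← LinearMap.range_eq_top, ← rangeOrTop_toFun_of_prop g hS]
  exact h S

end Subfunctor

namespace IsProjectiveCover

variable {k : Type} [Field k] {C : Type} [SmallCategory C] {Φ : ObjectProperty C}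
  [Φ.InheritedFromTarget ⊤] {P V : C ⥤ ModuleCat.{0} k} {p : P ⟶ V}

lemma whiskerLeft_ι (hp : IsProjectiveCover p) :
    IsProjectiveCover (Functor.whiskerLeft Φ.ι p) := by
  obtain ⟨hP, hp, hmin⟩ := hp
  refine ⟨ObjectProperty.projective_ι_comp_s10 hP, inferInstance, fun Q g _ => ?_⟩
  have := hmin _ _ (Subfunctor.epi_ι_rangeOrTop_comp g)
  exact Subfunctor.epi_of_rangeOrTop_eq_top g (Subfunctor.rangeOrTop g).eq_top_of_epi_ι

end IsProjectiveCover

instance FIcat.inheritedFromTarget_card_le (n : ℕ) :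
    ObjectProperty.InheritedFromTarget (fun S : FIcat => S.carrier.card ≤ n) ⊤ where
  of_hom_of_target f _ h := le_trans (by simpa using Fintype.card_le_of_injective f.1 f.2) h

theorem restriction_preserves_projective_covers_general (k : Type) [Field k] (n : ℕ)
    (V : FIcat ⥤ ModuleCat.{0} k)
    (P : FIcat ⥤ ModuleCat.{0} k) (p : P ⟶ V) (hp : IsProjectiveCover p) :
    IsProjectiveCover
      (Functor.whiskerLeft (ObjectProperty.ι fun S : FIcat => S.carrier.card ≤ n) p) :=
  hp.whiskerLeft_ι

theorem restriction_preserves_projective_covers (k : Type) [Field k] (n : ℕ)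
    (V : FIcat ⥤ ModuleCat.{0} k)
    (hfd : ∀ S : FIcat, FiniteDimensional k (V.obj S))
    (hfg : IsFinitelyGenerated V)
    (P : FIcat ⥤ ModuleCat.{0} k) (p : P ⟶ V) (hp : IsProjectiveCover p) :
    IsProjectiveCover
      (Functor.whiskerLeft (ObjectProperty.ι fun S : FIcat => S.carrier.card ≤ n) p) :=
  restriction_preserves_projective_covers_general k n V P p hp
end

section
/- Let k be a field and m ≥ 1 a natural number. For the category FI of finite sets of natural numbers and injections, let P_m denote the projective FI-module sending a finite set S to the free k-vector space on the set of injections from {1,…,m} to S, and let Σ denote the shift functor given by precomposition with the self-embedding of FI that adds one new point to every object (and extends every injection by fixing the new point). Then there is an isomorphism of FI-modules Σ P_m ≅ P_m ⊕ (P_{m−1})^{⊕ m}. -/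
/-
An injection `{1,…,m} → S ⊔ {∗}` either misses `∗`, and is then an injection into `S`, or sends
exactly one point `i` to `∗`, and is then an injection `{1,…,m} ∖ {i} ≅ {1,…,m-1} → S`.
Naturally in `S`, this exhibits `FI(I_m, ι -)` as the coproduct of `FI(I_m, -)` and `m` copies of
`FI(I_{m-1}, -)`. Taking free vector spaces is a left adjoint, so it preserves this coproduct, and
finite coproducts of `FI`-modules are biproducts.
-/

open CategoryTheory CategoryTheory.Limits

def newPt (S : FIcat) : ℕ := S.carrier.sup id + 1

theorem newPt_not_mem (S : FIcat) : newPt S ∉ S.carrier := by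
  intro h
  have := Finset.le_sup (f := id) h
  simp only [id_eq, newPt] at this h ⊢
  omega

/-- The underlying function of the extension of `f : S ⟶ T` to `S ⊔ {∗} → T ⊔ {∗}`. -/
def embMap {S T : FIcat} (f : S ⟶ T)
    (x : {a : ℕ // a ∈ insert (newPt S) S.carrier}) :
    {a : ℕ // a ∈ insert (newPt T) T.carrier} :=
  if h : x.1 ∈ S.carrier then
    ⟨(f.1 ⟨x.1, h⟩).1, Finset.mem_insert_of_mem (f.1 ⟨x.1, h⟩).2⟩
  else ⟨newPt T, Finset.mem_insert_self _ _⟩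

theorem embMap_val_mem {S T : FIcat} (f : S ⟶ T) (x) (h : x.1 ∈ S.carrier) :
    (embMap f x).1 = (f.1 ⟨x.1, h⟩).1 := by
  rw [embMap, dif_pos h]

theorem embMap_val_not_mem {S T : FIcat} (f : S ⟶ T) (x) (h : x.1 ∉ S.carrier) :
    (embMap f x).1 = newPt T := by
  rw [embMap, dif_neg h]

theorem embMap_injective {S T : FIcat} (f : S ⟶ T) : Function.Injective (embMap f) := by
  intro x y hxy
  have hval : (embMap f x).1 = (embMap f y).1 := congrArg Subtype.val hxy
  by_cases hx : x.1 ∈ S.carrier <;> by_cases hy : y.1 ∈ S.carrier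
  · rw [embMap_val_mem f x hx, embMap_val_mem f y hy] at hval
    have h1 : ((x : ℕ)) = (y : ℕ) := Subtype.mk_eq_mk.mp (f.2 (Subtype.ext hval))
    exact Subtype.ext h1
  · rw [embMap_val_mem f x hx, embMap_val_not_mem f y hy] at hval
    exact absurd (hval ▸ (f.1 ⟨x.1, hx⟩).2) (newPt_not_mem T)
  · rw [embMap_val_not_mem f x hx, embMap_val_mem f y hy] at hval
    exact absurd (hval.symm ▸ (f.1 ⟨y.1, hy⟩).2) (newPt_not_mem T)
  · have hx' := x.2
    have hy' := y.2
    rw [Finset.mem_insert] at hx' hy'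
    exact Subtype.ext ((hx'.resolve_right hx).trans (hy'.resolve_right hy).symm)

/-- The self-embedding `ι : FI → FI`, sending `S` to `S ⊔ {∗}` (with the new point `∗`
re-encoded as a natural number not belonging to `S`) and sending an injection
`f : S → T` to the injection agreeing with `f` on `S` and sending `∗` to `∗`. -/
def selfEmb : FIcat ⥤ FIcat where
  obj S := ⟨insert (newPt S) S.carrier⟩
  map f := ⟨embMap f, embMap_injective f⟩
  map_id S := by
    apply Subtype.ext
    funext x
    apply Subtype.ext
    by_cases h : x.1 ∈ S.carrier
    · rw [embMap_val_mem (𝟙 S) x h]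
      rfl
    · rw [embMap_val_not_mem (𝟙 S) x h]
      have hx' := x.2
      rw [Finset.mem_insert] at hx'
      exact (hx'.resolve_right h).symm
  map_comp {S T U} f g := by
    apply Subtype.ext
    funext x
    apply Subtype.ext
    show (embMap (f ≫ g) x).1 = (embMap g (embMap f x)).1
    by_cases h : x.1 ∈ S.carrier
    · rw [embMap_val_mem (f ≫ g) x h]
      have h2 : (embMap f x).1 ∈ T.carrier := by
        rw [embMap_val_mem f x h]; exact (f.1 ⟨x.1, h⟩).2
      rw [embMap_val_mem g _ h2]
      have heq : (⟨(embMap f x).1, h2⟩ : {a : ℕ // a ∈ T.carrier}) = f.1 ⟨x.1, h⟩ :=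
        Subtype.ext (embMap_val_mem f x h)
      show ((g.1 (f.1 ⟨x.1, h⟩)) : ℕ) = ((g.1 ⟨(embMap f x).1, h2⟩) : ℕ)
      exact congrArg (fun t => ((g.1 t) : ℕ)) heq.symm
    · rw [embMap_val_not_mem (f ≫ g) x h]
      have h2 : (embMap f x).1 ∉ T.carrier := by
        rw [embMap_val_not_mem f x h]; exact newPt_not_mem T
      rw [embMap_val_not_mem g _ h2]

/-- The object `{1, …, m}` of `FI`. -/
def stdObj (m : ℕ) : FIcat := ⟨Finset.Icc 1 m⟩

/-- The projective `FI`-module `P_m = k[FI({1,…,m}, -)]`, sending a finite set `S` to the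
free `k`-vector space on the set of injections `{1,…,m} → S`. -/
noncomputable def Pmod (k : Type) [Field k] (m : ℕ) : FIcat ⥤ ModuleCat.{0} k :=
  coyoneda.obj (Opposite.op (stdObj m)) ⋙ ModuleCat.free k

instance (k : Type) [Field k] : HasFiniteBiproducts (FIcat ⥤ ModuleCat.{0} k) :=
  HasFiniteBiproducts.of_hasFiniteProducts

instance (k : Type) [Field k] : HasBinaryBiproducts (FIcat ⥤ ModuleCat.{0} k) :=
  hasBinaryBiproducts_of_finite_biproducts _


universe w

noncomputable def isColimitCofanMkOfBijective {C : Type*} [Category C] {J : Type w}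
    {F : J → C ⥤ Type w} {P : C ⥤ Type w} (g : ∀ j, F j ⟶ P)
    (hg : ∀ S, Function.Bijective fun p : Σ j, (F j).obj S => (g p.1).app S p.2) :
    IsColimit (Cofan.mk P g) :=
  evaluationJointlyReflectsColimits _ fun S =>
    (isColimitMapCoconeCofanMkEquiv _ _ _).symm
      ((Cofan.nonempty_isColimit_iff_bijective_fromSigma _).mpr (hg S)).some

section BiprodOption

variable {C : Type*} [Category C] [Preadditive C] {ι : Type*} (X : Option ι → C)
  [HasBiproduct fun i => X (some i)] [HasBinaryBiproduct (X none) (⨁ fun i => X (some i))]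

noncomputable def biprodOptionInj : (o : Option ι) → (X o ⟶ X none ⊞ ⨁ fun i => X (some i))
  | none => biprod.inl
  | some i => biproduct.ι (fun i => X (some i)) i ≫ biprod.inr

noncomputable def isColimitCofanMkBiprodOptionInj : IsColimit (Cofan.mk _ (biprodOptionInj X)) :=
  Cofan.IsColimit.mk _
    (fun t => biprod.desc (t.inj none) (biproduct.desc fun i => t.inj (some i)))
    (fun t o => by cases o <;> simp [biprodOptionInj])
    (fun t f hf => by
      apply biprod.hom_ext'
      · simpa [biprodOptionInj] using hf none
      · apply biproduct.hom_ext'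
        intro i
        simpa [biprodOptionInj] using hf (some i))

end BiprodOption

namespace FIcat

variable {X Y S T : FIcat} {m : ℕ}

@[ext]
theorem hom_ext {f g : X ⟶ Y} (h : ∀ x, (f.1 x).1 = (g.1 x).1) : f = g :=
  Subtype.ext (funext fun x => Subtype.ext (h x))

@[simp]
theorem comp_val (f : X ⟶ Y) (g : Y ⟶ S) (x) : (f ≫ g).1 x = g.1 (f.1 x) := rfl

theorem mem_selfEmb_obj {x : ℕ} : x ∈ (selfEmb.obj S).carrier ↔ x = newPt S ∨ x ∈ S.carrier :=
  Finset.mem_insert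

theorem selfEmb_map_val_eq_newPt_iff (f : S ⟶ T) (x) :
    ((selfEmb.map f).1 x).1 = newPt T ↔ x.1 = newPt S := by
  by_cases hx : x.1 ∈ S.carrier
  · have hfx : ((selfEmb.map f).1 x).1 = (f.1 ⟨x.1, hx⟩).1 := embMap_val_mem f x hx
    refine iff_of_false (fun h => newPt_not_mem T ?_) (fun h => newPt_not_mem S (h ▸ hx))
    rw [← h, hfx]
    exact (f.1 _).2
  · exact iff_of_true (embMap_val_not_mem f x hx) ((mem_selfEmb_obj.mp x.2).resolve_right hx)

def incl (S : FIcat) : S ⟶ selfEmb.obj S :=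
  ⟨fun x => ⟨x.1, Finset.mem_insert_of_mem x.2⟩, fun _ _ h => Subtype.ext (Subtype.mk_eq_mk.mp h)⟩

theorem incl_val_ne_newPt (x : S.carrier) : ((incl S).1 x).1 ≠ newPt S :=
  fun h => newPt_not_mem S (h ▸ x.2)

theorem selfEmb_map_incl_val (f : S ⟶ T) (x) : ((selfEmb.map f).1 ((incl S).1 x)).1 = (f.1 x).1 :=
  embMap_val_mem f _ x.2

theorem incl_comp_selfEmb_map (f : S ⟶ T) : incl S ≫ selfEmb.map f = f ≫ incl T := by
  ext x
  exact selfEmb_map_incl_val f x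

def corestrict (g : X ⟶ selfEmb.obj S) (hg : ∀ x, (g.1 x).1 ≠ newPt S) : X ⟶ S :=
  ⟨fun x => ⟨(g.1 x).1, (mem_selfEmb_obj.mp (g.1 x).2).resolve_left (hg x)⟩,
    fun _ _ h => g.2 (Subtype.ext (Subtype.mk_eq_mk.mp h))⟩

theorem corestrict_comp_incl (g : X ⟶ selfEmb.obj S) (hg) : corestrict g hg ≫ incl S = g := rfl

theorem comp_selfEmb_map_injective (u : X ⟶ selfEmb.obj Y)
    (hu : ∀ y, ∃ x, u.1 x = (incl Y).1 y) :
    Function.Injective fun h : Y ⟶ S => u ≫ selfEmb.map h := by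
  intro h h' hh
  ext y
  obtain ⟨x, hx⟩ := hu y
  have := congrArg (fun g : X ⟶ selfEmb.obj S => (g.1 x).1) hh
  simpa only [comp_val, hx, selfEmb_map_incl_val] using this

theorem mem_stdObj {x : ℕ} : x ∈ (stdObj m).carrier ↔ 1 ≤ x ∧ x ≤ m := Finset.mem_Icc

theorem newPt_stdObj : newPt (stdObj m) = m + 1 := by
  cases m with
  | zero => rfl
  | succ n =>
    refine congrArg (· + 1) (le_antisymm (Finset.sup_le fun x hx => (mem_stdObj.mp hx).2) ?_)
    exact Finset.le_sup (f := id) (mem_stdObj.mpr ⟨by omega, le_rfl⟩)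

-- `i : Fin m` stands for the point `i + 1` of `stdObj m = {1, …, m}`.
def skip (i : Fin m) : stdObj (m - 1) ⟶ stdObj m :=
  ⟨fun y => ⟨if y.1 ≤ i.1 then y.1 else y.1 + 1, by
      have := mem_stdObj.mp y.2; have := i.2; rw [mem_stdObj]; split <;> omega⟩,
   fun a b h => by
      have h' := congrArg Subtype.val h
      dsimp only at h'
      apply Subtype.ext
      split_ifs at h' <;> omega⟩

theorem skip_val_ne (i : Fin m) (y) : ((skip i).1 y).1 ≠ i.1 + 1 := by
  dsimp only [skip]
  split_ifs <;> omega

theorem exists_skip_eq (i : Fin m) (x) (hx : x.1 ≠ i.1 + 1) : ∃ y, (skip i).1 y = x := by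
  have := mem_stdObj.mp x.2
  refine ⟨⟨if x.1 ≤ i.1 then x.1 else x.1 - 1, ?_⟩, Subtype.ext ?_⟩
  · rw [mem_stdObj]
    split_ifs <;> omega
  · simp only [skip]
    split_ifs <;> omega

def pinch (i : Fin m) : stdObj m ⟶ selfEmb.obj (stdObj (m - 1)) :=
  ⟨fun x => if hx : x.1 = i.1 + 1 then ⟨newPt _, Finset.mem_insert_self _ _⟩
      else ⟨if x.1 ≤ i.1 then x.1 else x.1 - 1, Finset.mem_insert_of_mem <| by
        have := mem_stdObj.mp x.2; have := i.2; rw [mem_stdObj]; split_ifs <;> omega⟩,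
   fun a b h => by
      have ha := mem_stdObj.mp a.2
      have hb := mem_stdObj.mp b.2
      have := newPt_stdObj (m := m - 1)
      have h' := congrArg Subtype.val h
      apply Subtype.ext
      by_cases hai : a.1 = i.1 + 1 <;> by_cases hbi : b.1 = i.1 + 1 <;>
        simp only [hai, hbi, ↓reduceDIte] at h' <;> (try split_ifs at h') <;> omega⟩

theorem pinch_val_eq_newPt_iff (i : Fin m) (x) :
    ((pinch i).1 x).1 = newPt (stdObj (m - 1)) ↔ x.1 = i.1 + 1 := by
  have hx := mem_stdObj.mp x.2
  have := newPt_stdObj (m := m - 1)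
  simp only [pinch, apply_dite Subtype.val]
  split_ifs <;> omega

theorem pinch_skip (i : Fin m) (y) : (pinch i).1 ((skip i).1 y) = (incl _).1 y := by
  apply Subtype.ext
  have hy := mem_stdObj.mp y.2
  simp only [pinch, skip, incl, apply_dite Subtype.val]
  split_ifs <;> omega

def pivot (i : Fin m) : (stdObj m).carrier :=
  ⟨i.1 + 1, mem_stdObj.mpr ⟨by omega, i.2⟩⟩

theorem pivot_surjective : Function.Surjective (pivot (m := m)) := fun x => by
  have := mem_stdObj.mp x.2
  exact ⟨⟨x.1 - 1, by omega⟩, Subtype.ext (by simp only [pivot]; omega)⟩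

def shiftArity (m : ℕ) : Option (Fin m) → ℕ
  | none => m
  | some _ => m - 1

-- `none` indexes the summand `P_m`, and `some i` the copy of `P_{m-1}` sending `i + 1` to `∗`.
def shiftSummandMor (m : ℕ) :
    (o : Option (Fin m)) → (stdObj m ⟶ selfEmb.obj (stdObj (shiftArity m o)))
  | none => incl (stdObj m)
  | some i => pinch i

theorem shiftSummandMor_pivot_eq_newPt_iff (o : Option (Fin m)) (i : Fin m) :
    ((shiftSummandMor m o).1 (pivot i)).1 = newPt (stdObj (shiftArity m o)) ↔ o = some i := by
  cases o with
  | none => exact iff_of_false (incl_val_ne_newPt _) (Option.some_ne_none i).symm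
  | some j =>
    refine (pinch_val_eq_newPt_iff j (pivot i)).trans ?_
    rw [Option.some_inj, Fin.ext_iff]
    simp only [pivot]
    omega

theorem exists_shiftSummandMor_eq_incl (o : Option (Fin m)) (y) :
    ∃ x, (shiftSummandMor m o).1 x = (incl _).1 y := by
  cases o with
  | none => exact ⟨y, rfl⟩
  | some i => exact ⟨(skip i).1 y, pinch_skip i y⟩

theorem shiftSummandMor_comp_selfEmb_map_injective :
    Function.Injective fun p : Σ o, stdObj (shiftArity m o) ⟶ S =>
      shiftSummandMor m p.1 ≫ selfEmb.map p.2 := by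
  rintro ⟨o, h⟩ ⟨o', h'⟩ hh
  have hsome (i : Fin m) : o = some i ↔ o' = some i := by
    rw [← shiftSummandMor_pivot_eq_newPt_iff, ← shiftSummandMor_pivot_eq_newPt_iff,
      ← selfEmb_map_val_eq_newPt_iff h, ← selfEmb_map_val_eq_newPt_iff h']
    exact Iff.of_eq
      (congrArg (fun g : stdObj m ⟶ selfEmb.obj S => (g.1 (pivot i)).1 = newPt S) hh)
  obtain rfl : o = o' := Option.ext hsome
  exact congrArg (Sigma.mk o)
    (comp_selfEmb_map_injective _ (exists_shiftSummandMor_eq_incl o) hh)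

theorem shiftSummandMor_comp_selfEmb_map_surjective :
    Function.Surjective fun p : Σ o, stdObj (shiftArity m o) ⟶ S =>
      shiftSummandMor m p.1 ≫ selfEmb.map p.2 := by
  intro g
  by_cases hg : ∃ i, (g.1 (pivot i)).1 = newPt S
  · obtain ⟨i, hi⟩ := hg
    have hskip (y) : (g.1 ((skip i).1 y)).1 ≠ newPt S := fun hy =>
      skip_val_ne i y (congrArg Subtype.val (g.2 (Subtype.ext (hy.trans hi.symm))))
    refine ⟨⟨some i, corestrict (skip i ≫ g) hskip⟩, ?_⟩
    ext x
    by_cases hx : x.1 = i.1 + 1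
    · obtain rfl : x = pivot i := Subtype.ext hx
      refine Eq.trans ?_ hi.symm
      exact (selfEmb_map_val_eq_newPt_iff _ _).mpr ((pinch_val_eq_newPt_iff i _).mpr hx)
    · obtain ⟨y, rfl⟩ := exists_skip_eq i x hx
      change ((selfEmb.map _).1 ((pinch i).1 ((skip i).1 y))).1 = _
      rw [pinch_skip]
      exact selfEmb_map_incl_val _ y
  · have hg' (x) : (g.1 x).1 ≠ newPt S := by
      obtain ⟨i, rfl⟩ := pivot_surjective x
      exact fun hx => hg ⟨i, hx⟩
    exact ⟨⟨none, corestrict g hg'⟩, (incl_comp_selfEmb_map _).trans (corestrict_comp_incl g hg')⟩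

noncomputable def isColimitShiftCofan (m : ℕ) :
    IsColimit (Cofan.mk (selfEmb ⋙ coyoneda.obj (Opposite.op (stdObj m))) fun o =>
      (coyonedaEquiv (X := stdObj (shiftArity m o))).symm (shiftSummandMor m o)) :=
  isColimitCofanMkOfBijective _ fun _ =>
    ⟨shiftSummandMor_comp_selfEmb_map_injective,
      shiftSummandMor_comp_selfEmb_map_surjective⟩

end FIcat

theorem shift_of_Pm_general (k : Type) [Field k] (m : ℕ) :
    Nonempty ((selfEmb ⋙ Pmod k m) ≅
      (Pmod k m ⊞ (⨁ fun _ : Fin m => Pmod k (m - 1)))) := by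
  have := (ModuleCat.adj k).leftAdjoint_preservesColimits
  have hfree := isColimitCofanMkObjOfIsColimit
    ((Functor.whiskeringRight _ _ _).obj (ModuleCat.free k)) _ _ (FIcat.isColimitShiftCofan m)
  exact ⟨hfree.coconePointUniqueUpToIso
    (isColimitCofanMkBiprodOptionInj fun o => Pmod k (FIcat.shiftArity m o))⟩

theorem shift_of_Pm (k : Type) [Field k] (m : ℕ) (hm : 1 ≤ m) :
    Nonempty ((selfEmb ⋙ Pmod k m) ≅
      (Pmod k m ⊞ (⨁ fun _ : Fin m => Pmod k (m - 1)))) :=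
  shift_of_Pm_general k m
end
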